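/- arXiv:2303.14752 — 2 statements merged into one kernel-verified Lean document; each statement's English description precedes it below -/
import Mathlib

section
/- Let $u:\mathcal{J}\to\mathbb{R}$ be a continuous strictly monotone bijection onto its image, $X$ a random variable, and $\mathcal{C}$ a class of measurable functions of $X$ closed in $L^2$ and satisfying the congruence condition $u\circ\mathcal{C}\circ u^{-1}=\mathcal{C}$. Then the best predictor of $Y$ by an element of $\mathcal{C}$ in the $d_u$ distance equals $u^{-1}$ applied to the best predictor of $u(Y)$ by an element of $\mathcal{C}$ (applied to $u(X)$) in the standard $L^2$ distance: $\Pi_{\mathcal{C},u}(Y) = u^{-1}(\Pi_{\mathcal{C}}(u(Y)))$. -/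
open MeasureTheory ProbabilityTheory Real Set Filter

/-- Theorem 2.3 of the paper: if the class `C` of predictors
satisfies the congruence condition `u ∘ C ∘ u⁻¹ = C`, then the best predictor
of `Y` by an element of `C` in the `d_u` distance is `u⁻¹` of the best
standard `L²` predictor of `u(Y)` by elements of `C` applied to `u(X)`:
`Π_{C,u}(Y) = u⁻¹(Π_C(u(Y)))`. -/
theorem restricted_prediction_congruence
    {Ω : Type*} [MeasurableSpace Ω] (μ : Measure Ω) [IsProbabilityMeasure μ]
    (u v : ℝ → ℝ) (hu_cont : Continuous u)
    (hu_mono : StrictMono u ∨ StrictAnti u)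
    (hvu : Function.LeftInverse v u) (huv : Function.RightInverse v u)
    (C : Set (ℝ → ℝ)) (hCmeas : ∀ φ ∈ C, Measurable φ)
    (hcong : (fun φ => u ∘ φ ∘ v) '' C = C)
    (X Y : Ω → ℝ) (φ₀ : ℝ → ℝ) (hφ₀ : φ₀ ∈ C)
    (hmin : ∀ φ ∈ C,
      ∫ ω, (u (Y ω) - φ₀ (u (X ω))) ^ 2 ∂μ ≤ ∫ ω, (u (Y ω) - φ (u (X ω))) ^ 2 ∂μ) :
    (v ∘ φ₀ ∘ u) ∈ C ∧
    ∀ φ ∈ C,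
      ∫ ω, (u (Y ω) - u ((v ∘ φ₀ ∘ u) (X ω))) ^ 2 ∂μ ≤
        ∫ ω, (u (Y ω) - u (φ (X ω))) ^ 2 ∂μ := by
  constructor
  · -- membership: write φ₀ = u ∘ ψ ∘ v with ψ ∈ C, then v ∘ φ₀ ∘ u = ψ
    have h := hcong ▸ hφ₀
    rw [← hcong] at hφ₀
    obtain ⟨ψ, hψ, hψeq⟩ := hφ₀
    have : v ∘ φ₀ ∘ u = ψ := by
      funext x
      simp [← hψeq, Function.comp, hvu (ψ (v (u x))), hvu x, hvu (ψ x)]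
    rw [this]; exact hψ
  · intro φ hφ
    have hmem : (u ∘ φ ∘ v) ∈ C := by
      rw [← hcong]; exact ⟨φ, hφ, rfl⟩
    have h := hmin (u ∘ φ ∘ v) hmem
    have e1 : ∀ ω, u ((v ∘ φ₀ ∘ u) (X ω)) = φ₀ (u (X ω)) := fun ω => huv _
    have e2 : ∀ ω, (u ∘ φ ∘ v) (u (X ω)) = u (φ (X ω)) := fun ω => by
      simp [Function.comp, hvu (X ω)]
    simp only [e1]
    simpa only [e2] using h
end

section
/- Let $\tau_L$ have density $f(t) = \frac{L}{\sqrt{2\pi t^3}} e^{-L^2/(2t)}$ on $(0,\infty)$ and let $u(t) = e^{-b/(2t)}$ for $b>0$, with inverse $u^{-1}(s) = b/(2\ln(1/s))$. Then the best $u$-predictor is $E_u[\tau_L] = u^{-1}(E[u(\tau_L)]) = \frac{b}{\ln(b/L^2 + 1)}$, and $E_u[\tau_L] \to L^2$ as $b \to 0^+$. -/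
open MeasureTheory Real Set Filter Topology

/-! The factor `exp (-b / (2t))` merges with the Lévy density of `τ_L` into
`t ^ (-3/2) * exp (-(b + L²) / (2t))`, which the substitution `t ↦ t⁻¹` turns into a Gamma
integral; hence `E[u(τ_L)] = L / √(b + L²)`, and `2 log (√(b + L²) / L) = log (b / L² + 1)`.
The limit is `b / log (1 + b / L²) → L²`, i.e. the derivative of `log (1 + b / L²)` at `0`. -/

theorem integral_rpow_neg_three_halves_mul_exp_neg_mul_inv {a : ℝ} (ha : 0 < a) :
    ∫ t in Ioi (0 : ℝ), t ^ (-(3 / 2) : ℝ) * exp (-(a * t⁻¹)) = √(π / a) := by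
  have hsubst := integral_comp_rpow_Ioi
    (fun t : ℝ => t ^ (-(3 / 2) : ℝ) * exp (-(a * t⁻¹))) (p := -1) (by norm_num)
  have hgamma : ∫ t in Ioi (0 : ℝ), t ^ (-(3 / 2) : ℝ) * exp (-(a * t⁻¹))
      = ∫ x in Ioi (0 : ℝ), x ^ ((1 : ℝ) / 2 - 1) * exp (-(a * x)) := by
    rw [← hsubst]
    refine setIntegral_congr_fun measurableSet_Ioi fun x (hx : 0 < x) => ?_
    simp only [smul_eq_mul, abs_neg, abs_one, one_mul]
    rw [rpow_neg_one, inv_inv, inv_rpow hx.le, ← rpow_neg hx.le, ← mul_assoc, ← rpow_add hx]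
    norm_num
  rw [hgamma, integral_rpow_mul_exp_neg_mul_Ioi (by norm_num) ha, Gamma_one_half_eq,
    ← sqrt_eq_rpow, ← sqrt_mul (by positivity), one_div_mul_eq_div]

theorem integral_exp_neg_div_mul_levy_density {L b : ℝ} (h : 0 < b + L ^ 2) :
    ∫ t in Ioi (0 : ℝ), exp (-b / (2 * t)) * (L / √(2 * π * t ^ 3) * exp (-L ^ 2 / (2 * t)))
      = L / √(b + L ^ 2) := by
  have hpointwise : ∀ t ∈ Ioi (0 : ℝ),
      exp (-b / (2 * t)) * (L / √(2 * π * t ^ 3) * exp (-L ^ 2 / (2 * t)))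
        = L / √(2 * π) * (t ^ (-(3 / 2) : ℝ) * exp (-((b + L ^ 2) / 2 * t⁻¹))) := by
    intro t (ht : 0 < t)
    have hsqrt : √(t ^ 3) = t ^ ((3 : ℝ) / 2) := by
      rw [sqrt_eq_rpow, ← rpow_natCast, ← rpow_mul ht.le]
      norm_num
    rw [sqrt_mul (by positivity), hsqrt, rpow_neg ht.le,
      show -((b + L ^ 2) / 2 * t⁻¹) = -b / (2 * t) + -L ^ 2 / (2 * t) by field_simp; ring,
      exp_add]
    field_simp
  rw [setIntegral_congr_fun measurableSet_Ioi hpointwise, integral_const_mul,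
    integral_rpow_neg_three_halves_mul_exp_neg_mul_inv (by positivity),
    show π / ((b + L ^ 2) / 2) = 2 * π / (b + L ^ 2) by field_simp, sqrt_div (by positivity)]
  field_simp

theorem two_mul_log_one_div_div_sqrt {L b : ℝ} (hL : L ≠ 0) (h : 0 < b + L ^ 2) :
    2 * log (1 / (L / √(b + L ^ 2))) = log (b / L ^ 2 + 1) := by
  rw [one_div_div, log_div (by positivity) hL, log_sqrt h.le,
    show b / L ^ 2 + 1 = (b + L ^ 2) / L ^ 2 by field_simp,
    log_div h.ne' (by positivity), log_pow]
  push_cast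
  ring

theorem tendsto_div_log_div_add_one {c : ℝ} (hc : c ≠ 0) :
    Tendsto (fun b => b / log (b / c + 1)) (𝓝[≠] 0) (𝓝 c) := by
  have hderiv : HasDerivAt (fun b => log (b / c + 1)) c⁻¹ 0 := by
    simpa using (((hasDerivAt_id (0 : ℝ)).div_const c).add_const 1).log (by simp)
  simpa [slope_fun_def, div_eq_inv_mul] using
    (hasDerivAt_iff_tendsto_slope.mp hderiv).inv₀ (inv_ne_zero hc)

/-- for the hitting-time density and `u(t) = exp(-b/(2t))` with
inverse `u⁻¹(s) = b/(2 ln(1/s))`, the best `u`-predictor is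
`E_u[τ_L] = u⁻¹(E[u(τ_L)]) = b / ln(b/L² + 1)`, and `E_u[τ_L] → L²` as
`b → 0⁺`. -/
theorem hitting_time_best_predictor
    (L : ℝ) (hL : 0 < L) :
    (∀ b > (0 : ℝ),
      b / (2 * Real.log (1 / ∫ t in Set.Ioi (0 : ℝ),
          Real.exp (-b / (2 * t)) *
            (L / Real.sqrt (2 * Real.pi * t ^ 3) * Real.exp (-L ^ 2 / (2 * t)))))
        = b / Real.log (b / L ^ 2 + 1)) ∧
    Tendsto (fun b : ℝ => b / Real.log (b / L ^ 2 + 1)) (nhdsWithin 0 (Set.Ioi 0))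
      (nhds (L ^ 2)) := by
  refine ⟨fun b hb => ?_, ?_⟩
  · have h : 0 < b + L ^ 2 := by positivity
    rw [integral_exp_neg_div_mul_levy_density h, two_mul_log_one_div_div_sqrt hL.ne' h]
  · exact (tendsto_div_log_div_add_one (pow_ne_zero 2 hL.ne')).mono_left
      (nhdsWithin_mono _ fun _ (hb : 0 < _) => hb.ne')
end
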